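/- arXiv:1409.0338 — 2 statements merged into one kernel-verified Lean document; each statement's English description precedes it below -/
import Mathlib

section
/- Let a = (a_1,...,a_n), b = (b_1,...,b_m), c = (c_1,...,c_{m+n}) be partitions (weakly decreasing sequences of nonnegative integers). Define h_q := min{ i : b_{i-q+1} < c_i } for q = 1,...,n (with the conventions b_i = +∞ for i ≤ 0, b_i = -∞ for i > m, c_i = -∞ for i > m+n), and define x_1 := Σ_{i=1}^{h_1} c_i − Σ_{i=1}^{h_1−1} b_i and x_q := Σ_{i=1}^{h_q} c_i − Σ_{i=1}^{h_q−q} b_i − x_1 − ... − x_{q−1}. Suppose b_i ≥ c_{i+n} for i = 1,...,m and Σ b_i + Σ a_i = Σ c_i. Then the generalized majorization c ≺ (b,a) holds if and only if x ≼ a in the dominance ordering (i.e., Σ_{i=1}^{k} x_i ≤ Σ_{i=1}^{k} a_i for all k, with equality for k = n). -/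
/-- `a` is a partition with (at most) `n` parts `a 1 ≥ a 2 ≥ ... ≥ a n ≥ 0`
(values of `a` outside `{1, ..., n}` are irrelevant). -/
def IsPartOn (a : ℕ → ℤ) (n : ℕ) : Prop :=
  (∀ i, 1 ≤ i → i ≤ n → 0 ≤ a i) ∧ ∀ i, 1 ≤ i → i + 1 ≤ n → a (i + 1) ≤ a i

/-- The extension of a partition `b = (b 1, ..., b m)` by `+∞` for indices `≤ 0`
and by `-∞` for indices `> m`. -/
noncomputable def extSeq (b : ℕ → ℤ) (m : ℕ) : ℤ → EReal := fun i =>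
  if i ≤ 0 then ⊤ else if i ≤ (m : ℤ) then (((b i.toNat : ℤ) : ℝ) : EReal) else ⊥

/-- `hIdx b c m n q` is `h_q = min { i | b (i - q + 1) < c i }`, with the conventions
`b i = +∞` for `i ≤ 0`, `b i = -∞` for `i > m`, `c i = -∞` for `i > m + n`. -/
noncomputable def hIdx (b c : ℕ → ℤ) (m n q : ℕ) : ℕ :=
  sInf { i : ℕ | extSeq b m ((i : ℤ) - q + 1) < extSeq c (m + n) i }

/-- `csum a t = a 1 + a 2 + ... + a t`. -/
def csum (a : ℕ → ℤ) (t : ℕ) : ℤ := ∑ i ∈ Finset.Icc 1 t, a i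

/-- `Ssum b c m n q = Σ_{i=1}^{h_q} c i - Σ_{i=1}^{h_q - q} b i` (and `0` for `q = 0`),
so that `x 1 + ... + x q = Ssum b c m n q`. -/
noncomputable def Ssum (b c : ℕ → ℤ) (m n q : ℕ) : ℤ :=
  if q = 0 then 0 else csum c (hIdx b c m n q) - csum b (hIdx b c m n q - q)

/-- The sequence `x` defined by `x 1 = Σ_{i=1}^{h_1} c i - Σ_{i=1}^{h_1 - 1} b i` and
`x q = Σ_{i=1}^{h_q} c i - Σ_{i=1}^{h_q - q} b i - x 1 - ... - x (q-1)`. -/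
noncomputable def xSeq (b c : ℕ → ℤ) (m n q : ℕ) : ℤ :=
  Ssum b c m n q - Ssum b c m n (q - 1)

/-- Dominance ordering `x ≼ a` for sequences of length `n` (equal sums and all
partial-sum inequalities). -/
def DomOn (x a : ℕ → ℤ) (n : ℕ) : Prop :=
  (∀ j, 1 ≤ j → j ≤ n → csum x j ≤ csum a j) ∧ csum x n = csum a n

/-- Generalized majorization `c ≺ (b, a)`, where `a` has `n` parts, `b` has `m` parts
and `c` has `m + n` parts. -/
noncomputable def GenMaj (c b a : ℕ → ℤ) (m n : ℕ) : Prop :=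
  (∀ i, 1 ≤ i → i ≤ m → c (i + n) ≤ b i) ∧
  csum b m + csum a n = csum c (m + n) ∧
  ∀ q, 1 ≤ q → q ≤ n →
    csum c (hIdx b c m n q) - csum b (hIdx b c m n q - q) ≤ csum a q

/-- Elementary generalized majorization `d ≺₁ (e, a1)`, where `e` has `m` parts and
`d` has `m + 1` parts. -/
noncomputable def ElemGenMaj (d e : ℕ → ℤ) (a1 : ℤ) (m : ℕ) : Prop :=
  (∀ i, 1 ≤ i → i ≤ m → d (i + 1) ≤ e i) ∧
  csum e m + a1 = csum d (m + 1) ∧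
  ∀ i, hIdx e d m 1 1 ≤ i → i ≤ m → e i = d (i + 1)

/-!
The partial sums of `x` telescope to `Σ_{i ≤ h_q} c i - Σ_{i ≤ h_q - q} b i`, so the inequalities
of `x ≼ a` are literally those of `c ≺ (b, a)`. The one extra condition, equality of the totals,
holds because `n ≤ h_n ≤ m + n` and the interlacing `c (i + n) ≤ b i` bound the tails of `c` beyond
`h_n` by the tails of `b` beyond `h_n - n`; hence `Σ a = Σ c - Σ b` is at most the `n`-th partial
sum of `x`.
-/

lemma csum_add_one (a : ℕ → ℤ) (t : ℕ) : csum a (t + 1) = csum a t + a (t + 1) :=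
  Finset.sum_Icc_succ_top (by omega) a

lemma Ssum_of_pos {b c : ℕ → ℤ} {m n q : ℕ} (hq : 1 ≤ q) :
    Ssum b c m n q = csum c (hIdx b c m n q) - csum b (hIdx b c m n q - q) :=
  if_neg (by omega)

lemma csum_xSeq (b c : ℕ → ℤ) (m n j : ℕ) : csum (xSeq b c m n) j = Ssum b c m n j := by
  induction j with
  | zero => simp [csum, Ssum]
  | succ k ih => rw [csum_add_one, ih, xSeq, Nat.add_sub_cancel, add_sub_cancel]

section hIdx

variable {b c : ℕ → ℤ} {m n q : ℕ}

lemma add_mem_setOf_hIdx (hq : 1 ≤ q) (hqn : q ≤ n) :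
    m + q ∈ { i : ℕ | extSeq b m ((i : ℤ) - q + 1) < extSeq c (m + n) i } := by
  have hidx : ((m + q : ℕ) : ℤ) - q + 1 = m + 1 := by push_cast; ring
  simp only [Set.mem_ofPred_eq, hidx, extSeq]
  rw [if_neg (by omega), if_neg (by omega), if_neg (by omega), if_pos (by omega)]
  exact bot_lt_iff_ne_bot.mpr (EReal.coe_ne_bot _)

lemma hIdx_le (hq : 1 ≤ q) (hqn : q ≤ n) : hIdx b c m n q ≤ m + q :=
  Nat.sInf_le (add_mem_setOf_hIdx hq hqn)

lemma le_hIdx (hq : 1 ≤ q) (hqn : q ≤ n) : q ≤ hIdx b c m n q := by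
  refine le_csInf ⟨m + q, add_mem_setOf_hIdx hq hqn⟩ fun i hi => ?_
  by_contra! hiq
  rw [Set.mem_ofPred_eq, extSeq, if_pos (by omega)] at hi
  exact not_top_lt hi

end hIdx

lemma csum_sub_csum_le_of_interlace {b c : ℕ → ℤ} {m n s : ℕ}
    (hcb : ∀ i, 1 ≤ i → i ≤ m → c (i + n) ≤ b i) (hs : s ≤ m) :
    csum c (m + n) - csum c (s + n) ≤ csum b m - csum b s := by
  induction m, hs using Nat.le_induction with
  | base => simp
  | succ k hsk ih =>
    have hk := hcb (k + 1) (by omega) le_rfl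
    have ih := ih fun i hi hik => hcb i hi (by omega)
    rw [Nat.add_right_comm, csum_add_one, csum_add_one, Nat.add_right_comm]
    linarith

lemma csum_sub_csum_le_Ssum {b c : ℕ → ℤ} {m n : ℕ}
    (hcb : ∀ i, 1 ≤ i → i ≤ m → c (i + n) ≤ b i) :
    csum c (m + n) - csum b m ≤ Ssum b c m n n := by
  rcases Nat.eq_zero_or_pos n with rfl | hn
  · simpa [Ssum, csum] using csum_sub_csum_le_of_interlace hcb (Nat.zero_le m)
  · have hle : hIdx b c m n n ≤ m + n := hIdx_le hn le_rfl
    have hge : n ≤ hIdx b c m n n := le_hIdx hn le_rfl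
    have htail := csum_sub_csum_le_of_interlace (s := hIdx b c m n n - n) hcb (by omega)
    rw [Nat.sub_add_cancel hge] at htail
    rw [Ssum_of_pos hn]
    linarith

theorem genMaj_iff_dominance_general (a b c : ℕ → ℤ) (m n : ℕ)
    (h1 : ∀ i, 1 ≤ i → i ≤ m → c (i + n) ≤ b i)
    (h2 : csum b m + csum a n = csum c (m + n)) :
    GenMaj c b a m n ↔ DomOn (xSeq b c m n) a n := by
  have hx (q : ℕ) (hq : 1 ≤ q) :
      csum (xSeq b c m n) q = csum c (hIdx b c m n q) - csum b (hIdx b c m n q - q) := by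
    rw [csum_xSeq, Ssum_of_pos hq]
  have htotal : csum a n ≤ csum (xSeq b c m n) n := by
    rw [csum_xSeq]
    linarith [csum_sub_csum_le_Ssum h1]
  constructor
  · rintro ⟨-, -, hmaj⟩
    have hdom (j : ℕ) (hj : 1 ≤ j) (hjn : j ≤ n) : csum (xSeq b c m n) j ≤ csum a j :=
      hx j hj ▸ hmaj j hj hjn
    refine ⟨hdom, ?_⟩
    rcases Nat.eq_zero_or_pos n with rfl | hn
    · simp [csum]
    · exact le_antisymm (hdom n hn le_rfl) htotal
  · rintro ⟨hdom, -⟩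
    exact ⟨h1, h2, fun q hq hqn => hx q hq ▸ hdom q hq hqn⟩

/-- the generalized majorization `c ≺ (b, a)` holds iff `x ≼ a`
in the dominance ordering. -/
theorem genMaj_iff_dominance (a b c : ℕ → ℤ) (m n : ℕ)
    (ha : IsPartOn a n) (hb : IsPartOn b m) (hc : IsPartOn c (m + n))
    (h1 : ∀ i, 1 ≤ i → i ≤ m → c (i + n) ≤ b i)
    (h2 : csum b m + csum a n = csum c (m + n)) :
    GenMaj c b a m n ↔ DomOn (xSeq b c m n) a n :=
  genMaj_iff_dominance_general a b c m n h1 h2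
end

section
/- With the notation of generalized majorization, the indices h_q = min{ i : b_{i−q+1} < c_i } satisfy q ≤ h_q ≤ q + m for each q = 1,...,n, and h_1 < h_2 < ... < h_n. -/
/-!
At `i < q` the index `i - q + 1` is `≤ 0`, where `b = +∞`, so `h_q ≥ q`; at `i = q + m` it is
`m + 1`, where `b = -∞` while `c_{q+m}` is finite, so `h_q ≤ q + m`. For strict monotonicity,
`i = h_{q+1} - 1` already satisfies the defining inequality of `h_q`: it compares the same entry
`b_{h_{q+1} - q}` with `c_{h_{q+1} - 1} ≥ c_{h_{q+1}}`.
-/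

theorem IsPartOn.antitoneOn {a : ℕ → ℤ} {N : ℕ} (ha : IsPartOn a N) :
    AntitoneOn a (Set.Icc 1 N) :=
  antitoneOn_of_succ_le Set.ordConnected_Icc fun i _ hi hi' ↦ ha.2 i hi.1 hi'.2

namespace extSeq

variable {a : ℕ → ℤ} {N : ℕ} {i : ℤ}

theorem of_nonpos (hi : i ≤ 0) : extSeq a N i = ⊤ := if_pos hi

theorem of_lt (hi : (N : ℤ) < i) : extSeq a N i = ⊥ := by
  simp [extSeq, show ¬i ≤ 0 by omega, show ¬i ≤ N by omega]

theorem of_mem_Icc (hi : 1 ≤ i) (hiN : i ≤ N) : extSeq a N i = ((a i.toNat : ℝ) : EReal) := by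
  simp [extSeq, show ¬i ≤ 0 by omega, hiN]

theorem antitone (ha : IsPartOn a N) : Antitone (extSeq a N) := by
  intro i j hij
  rcases le_or_gt j 0 with hj | hj
  · simp [of_nonpos hj, of_nonpos (hij.trans hj)]
  rcases le_or_gt i 0 with hi | hi
  · simp [of_nonpos hi]
  rcases le_or_gt j N with hjN | hjN
  · rw [of_mem_Icc hj hjN, of_mem_Icc hi (hij.trans hjN), EReal.coe_le_coe_iff, Int.cast_le]
    exact ha.antitoneOn ⟨by omega, by omega⟩ ⟨by omega, by omega⟩ (by omega)
  · simp [of_lt hjN]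

end extSeq

theorem le_of_extSeq_sub_add_one_lt {b : ℕ → ℤ} {m q i : ℕ} {x : EReal}
    (h : extSeq b m ((i : ℤ) - q + 1) < x) : q ≤ i := by
  by_contra! hi
  rw [extSeq.of_nonpos (by omega)] at h
  exact not_top_lt h

namespace hIdx

variable {b c : ℕ → ℤ} {m n q : ℕ}

theorem extSeq_lt_at_add (hq : 1 ≤ q) (hqn : q ≤ n) :
    extSeq b m (((q + m : ℕ) : ℤ) - q + 1) < extSeq c (m + n) (q + m : ℕ) := by
  rw [extSeq.of_lt (by omega), extSeq.of_mem_Icc (by omega) (by omega)]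
  exact EReal.bot_lt_coe _

theorem extSeq_lt (hq : 1 ≤ q) (hqn : q ≤ n) :
    extSeq b m ((hIdx b c m n q : ℤ) - q + 1) < extSeq c (m + n) (hIdx b c m n q) :=
  Nat.sInf_mem (s := {i : ℕ | extSeq b m ((i : ℤ) - q + 1) < extSeq c (m + n) i})
    ⟨_, extSeq_lt_at_add hq hqn⟩

theorem le_add (hq : 1 ≤ q) (hqn : q ≤ n) : hIdx b c m n q ≤ q + m :=
  Nat.sInf_le (extSeq_lt_at_add hq hqn)

theorem le_self (hq : 1 ≤ q) (hqn : q ≤ n) : q ≤ hIdx b c m n q :=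
  le_of_extSeq_sub_add_one_lt (extSeq_lt hq hqn)

theorem lt_succ (hc : IsPartOn c (m + n)) (hq : 1 ≤ q) (hqn : q + 1 ≤ n) :
    hIdx b c m n q < hIdx b c m n (q + 1) := by
  set i := hIdx b c m n (q + 1)
  have hqi : q + 1 ≤ i := le_self (by omega) hqn
  have hpred : extSeq b m (((i - 1 : ℕ) : ℤ) - q + 1) < extSeq c (m + n) (i - 1 : ℕ) := by
    have hshift : ((i - 1 : ℕ) : ℤ) - q + 1 = (i : ℤ) - (q + 1 : ℕ) + 1 := by omega
    rw [hshift]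
    exact (extSeq_lt (by omega) hqn).trans_le (extSeq.antitone hc (by omega))
  have : hIdx b c m n q ≤ i - 1 := Nat.sInf_le hpred
  omega

end hIdx

theorem hIdx_bounds_and_strictMono_general (b c : ℕ → ℤ) (m n : ℕ)
    (hc : IsPartOn c (m + n)) :
    (∀ q, 1 ≤ q → q ≤ n → q ≤ hIdx b c m n q ∧ hIdx b c m n q ≤ q + m) ∧
    (∀ q, 1 ≤ q → q + 1 ≤ n → hIdx b c m n q < hIdx b c m n (q + 1)) :=
  ⟨fun _ hq hqn ↦ ⟨hIdx.le_self hq hqn, hIdx.le_add hq hqn⟩,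
    fun _ hq hqn ↦ hIdx.lt_succ hc hq hqn⟩

/-- `q ≤ h_q ≤ q + m` for `q = 1, ..., n`, and `h_1 < h_2 < ... < h_n`. -/
theorem hIdx_bounds_and_strictMono (b c : ℕ → ℤ) (m n : ℕ)
    (hb : IsPartOn b m) (hc : IsPartOn c (m + n))
    (h1 : ∀ i, 1 ≤ i → i ≤ m → c (i + n) ≤ b i) :
    (∀ q, 1 ≤ q → q ≤ n → q ≤ hIdx b c m n q ∧ hIdx b c m n q ≤ q + m) ∧
    (∀ q, 1 ≤ q → q + 1 ≤ n → hIdx b c m n q < hIdx b c m n (q + 1)) :=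
  hIdx_bounds_and_strictMono_general b c m n hc
end
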